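/- arXiv:2404.01738 — 8 statements merged into one kernel-verified Lean document; each statement's English description precedes it below -/
import Mathlib

section
/- Let X be a real Banach space and L : X → ℝ a three times continuously Fréchet differentiable functional. Then for all x, x̃ ∈ X, setting e := x − x̃, one has L(x) − L(x̃) = (1/2)·(L'(x)(e) + L'(x̃)(e)) + (1/2)·∫₀¹ L'''(x̃ + s·e)(e,e,e)·s·(s−1) ds, where L'(y) denotes the first Fréchet derivative of L at y (a continuous linear functional on X) and L'''(y) the third Fréchet derivative of L at y (a continuous trilinear form on X). -/
/-!
Along the segment `s ↦ x̃ + s • e` the functions `gₖ s = L⁽ᵏ⁾(x̃ + s • e)(e, …, e)` satisfy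
`gₖ' = gₖ₊₁`. The fundamental theorem of calculus gives `L x - L x̃ = ∫₀¹ g₁`, and two integrations
by parts against `s (s - 1)` turn `∫₀¹ g₁` into the trapezoidal value `(g₁ 0 + g₁ 1) / 2` plus the
remainder `½ ∫₀¹ g₃ s · s (s - 1) ds`.
-/

open Set intervalIntegral

theorem integral_eq_trapezoid_add_integral_smul {E : Type*} [NormedAddCommGroup E]
    [NormedSpace ℝ E] [CompleteSpace E] {f f' f'' : ℝ → E} {a b : ℝ}
    (hf : ∀ t ∈ uIcc a b, HasDerivAt f (f' t) t) (hf' : ∀ t ∈ uIcc a b, HasDerivAt f' (f'' t) t)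
    (hf'' : IntervalIntegrable f'' MeasureTheory.volume a b) :
    ∫ t in a..b, f t =
      ((b - a) / 2) • (f a + f b) + (1 / 2 : ℝ) • ∫ t in a..b, ((t - a) * (t - b)) • f'' t := by
  have hp : ∀ t ∈ uIcc a b, HasDerivAt (fun s : ℝ => (s - a) * (s - b)) (2 * t - a - b) t :=
    fun t _ => (((hasDerivAt_id t).sub_const a).fun_mul ((hasDerivAt_id t).sub_const b)).congr_deriv
      (by simp only [id]; ring)
  have hq : ∀ t ∈ uIcc a b, HasDerivAt (fun s : ℝ => 2 * s - a - b) 2 t :=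
    fun t _ => by simpa using (((hasDerivAt_id t).const_mul 2).sub_const a).sub_const b
  have hf_int : IntervalIntegrable f MeasureTheory.volume a b :=
    ContinuousOn.intervalIntegrable fun t ht => (hf t ht).continuousAt.continuousWithinAt
  have hf'_int : IntervalIntegrable f' MeasureTheory.volume a b :=
    ContinuousOn.intervalIntegrable fun t ht => (hf' t ht).continuousAt.continuousWithinAt
  have parts₁ := integral_smul_deriv_eq_deriv_smul hp hf'
    ((by fun_prop : Continuous fun t : ℝ => 2 * t - a - b).intervalIntegrable a b) hf''
  have parts₂ := integral_smul_deriv_eq_deriv_smul hq hf intervalIntegrable_const hf'_int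
  simp only [sub_self, mul_zero, zero_mul, zero_smul] at parts₁
  rw [parts₁, parts₂, integral_smul]
  module

theorem hasDerivAt_iteratedFDeriv_add_smul {𝕜 E F : Type*} [NontriviallyNormedField 𝕜]
    [NormedAddCommGroup E] [NormedSpace 𝕜 E] [NormedAddCommGroup F] [NormedSpace 𝕜 F]
    {f : E → F} {x y : E} {t : 𝕜} {n : ℕ} (hf : ContDiffAt 𝕜 (n + 1) f (x + t • y)) :
    HasDerivAt (fun s : 𝕜 => iteratedFDeriv 𝕜 n f (x + s • y) (fun _ => y))
      (iteratedFDeriv 𝕜 (n + 1) f (x + t • y) (fun _ => y)) t := by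
  have hdiff : DifferentiableAt 𝕜 (iteratedFDeriv 𝕜 n f) (x + t • y) :=
    hf.differentiableAt_iteratedFDeriv (by norm_cast; omega)
  rw [← hf.deriv_fderiv_add_smul]
  exact DifferentiableAt.hasDerivAt (by fun_prop)

theorem fundamental_trapezoid_identity_general {X : Type*}
    [NormedAddCommGroup X] [NormedSpace ℝ X]
    (L : X → ℝ) (hL : ContDiff ℝ 3 L) (x xt : X) :
    L x - L xt =
      (1/2) * (fderiv ℝ L x (x - xt) + fderiv ℝ L xt (x - xt)) +
        (1/2) * ∫ s in (0:ℝ)..1,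
          (iteratedFDeriv ℝ 3 L (xt + s • (x - xt)) ![x - xt, x - xt, x - xt])
            * (s * (s - 1)) := by
  set e := x - xt
  set g : ℕ → ℝ → ℝ := fun k s => iteratedFDeriv ℝ k L (xt + s • e) (fun _ => e)
  have hg_deriv (k : ℕ) (hk : k < 3) (s : ℝ) : HasDerivAt (g k) (g (k + 1) s) s :=
    hasDerivAt_iteratedFDeriv_add_smul (hL.contDiffAt.of_le (by norm_cast))
  have hg₁_cont : Continuous (g 1) :=
    continuous_iff_continuousAt.2 fun s => (hg_deriv 1 (by norm_num) s).continuousAt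
  have hg₃_cont : Continuous (g 3) := by
    have := hL.continuous_iteratedFDeriv (m := 3) le_rfl
    fun_prop
  have ftc : L x - L xt = ∫ s in (0:ℝ)..1, g 1 s := by
    rw [integral_eq_sub_of_hasDerivAt (fun s _ => hg_deriv 0 (by norm_num) s)
      (hg₁_cont.intervalIntegrable 0 1)]
    simp [g, e]
  have trapezoid := integral_eq_trapezoid_add_integral_smul (a := 0) (b := 1)
    (fun s _ => hg_deriv 1 (by norm_num) s) (fun s _ => hg_deriv 2 (by norm_num) s)
    (hg₃_cont.intervalIntegrable 0 1)
  have hg₁_zero : g 1 0 = fderiv ℝ L xt e := by simp [g]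
  have hg₁_one : g 1 1 = fderiv ℝ L x e := by simp [g, e]
  have hvec : ![e, e, e] = fun _ => e := by
    ext i; fin_cases i <;> rfl
  rw [ftc, trapezoid, hg₁_zero, hg₁_one, hvec, add_comm (fderiv ℝ L x e)]
  simp only [g, smul_eq_mul, sub_zero, mul_comm]

/-- For a three times continuously Fréchet differentiable functional `L` on a
real Banach space `X` and all `x, x̃ ∈ X`, with `e := x − x̃`:
`L x − L x̃ = (1/2)(L'(x)(e) + L'(x̃)(e)) + (1/2)∫₀¹ L'''(x̃+s e)(e,e,e) s (s−1) ds`. -/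
theorem fundamental_trapezoid_identity {X : Type*}
    [NormedAddCommGroup X] [NormedSpace ℝ X] [CompleteSpace X]
    (L : X → ℝ) (hL : ContDiff ℝ 3 L) (x xt : X) :
    L x - L xt =
      (1/2) * (fderiv ℝ L x (x - xt) + fderiv ℝ L xt (x - xt)) +
        (1/2) * ∫ s in (0:ℝ)..1,
          (iteratedFDeriv ℝ 3 L (xt + s • (x - xt)) ![x - xt, x - xt, x - xt])
            * (s * (s - 1)) :=
  fundamental_trapezoid_identity_general L hL x xt
end

section
/- Let U and V be real Banach spaces, U_h ⊆ U and V_h ⊆ V linear subspaces, and let A : U → V* and J : U → ℝ be Fréchet differentiable at a point ũ ∈ U. Suppose z̃ ∈ V_h satisfies the discrete adjoint equation A'(ũ)(v)(z̃) = J'(ũ)(v) for all v ∈ U_h, and δũ ∈ U_h satisfies the Newton-update equation A'(ũ)(δũ)(v) = −A(ũ)(v) for all v ∈ V_h. Then the iteration error estimator admits the representation ρ(ũ)(z̃) = J'(ũ)(δũ), i.e. −A(ũ)(z̃) = J'(ũ)(δũ). -/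
/-- Representation of the iteration error estimator: if `z̃ ∈ V_h` solves the
discrete adjoint equation on `U_h` and `δũ ∈ U_h` solves the Newton-update
equation on `V_h`, then `ρ(ũ)(z̃) = −A(ũ)(z̃) = J'(ũ)(δũ)`. -/
theorem iteration_error_representation {U V : Type*}
    [NormedAddCommGroup U] [NormedSpace ℝ U] [CompleteSpace U]
    [NormedAddCommGroup V] [NormedSpace ℝ V] [CompleteSpace V]
    (Uh : Submodule ℝ U) (Vh : Submodule ℝ V)
    (A : U → V →L[ℝ] ℝ) (J : U → ℝ) (ut : U)
    (hA : DifferentiableAt ℝ A ut) (hJ : DifferentiableAt ℝ J ut)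
    (zt : V) (hztm : zt ∈ Vh)
    (hadj : ∀ v ∈ Uh, fderiv ℝ A ut v zt = fderiv ℝ J ut v)
    (δu : U) (hδum : δu ∈ Uh)
    (hnewton : ∀ v ∈ Vh, fderiv ℝ A ut δu v = -(A ut v)) :
    -(A ut zt) = fderiv ℝ J ut δu := by
  rw [← hadj δu hδum]
  exact (hnewton zt hztm).symm
end

section
/- Let e, d, η_h, η_k, η_R ∈ ℝ satisfy the error representation e = d + η_h + η_k + η_R, and suppose there exists b ∈ (0,1) with |d| ≤ b·|e| (saturation assumption). Then the two-sided discretization error estimate (1/(1+b))·(|η_h| − |η_k + η_R|) ≤ |e| ≤ (1/(1−b))·(|η_h| + |η_k + η_R|) holds. If, in addition, there exists α ∈ (0,1) with |η_k + η_R| ≤ α·|η_h|, then the discretization error estimator η_h is efficient and reliable: ((1−α)/(1+b))·|η_h| ≤ |e| ≤ ((1+α)/(1−b))·|η_h|. -/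
/-- Almost efficiency and reliability of the discretization error estimator:
if `e = d + η_h + η_k + η_R` and `|d| ≤ b⋅|e|` with `b ∈ (0,1)`, then
`(1/(1+b))(|η_h| − |η_k + η_R|) ≤ |e| ≤ (1/(1−b))(|η_h| + |η_k + η_R|)`;
if moreover `|η_k + η_R| ≤ α⋅|η_h|` with `α ∈ (0,1)`, then
`((1−α)/(1+b))⋅|η_h| ≤ |e| ≤ ((1+α)/(1−b))⋅|η_h|`. -/
theorem discretization_estimator_almost_efficient_reliable
    (e d ηh ηk ηR b : ℝ) (hrep : e = d + ηh + ηk + ηR)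
    (hb : b ∈ Set.Ioo (0:ℝ) 1) (hsat : |d| ≤ b * |e|) :
    ((1 / (1 + b)) * (|ηh| - |ηk + ηR|) ≤ |e| ∧
      |e| ≤ (1 / (1 - b)) * (|ηh| + |ηk + ηR|)) ∧
    (∀ α ∈ Set.Ioo (0:ℝ) 1, |ηk + ηR| ≤ α * |ηh| →
      ((1 - α) / (1 + b)) * |ηh| ≤ |e| ∧ |e| ≤ ((1 + α) / (1 - b)) * |ηh|) := by
  obtain ⟨hb0, hb1⟩ := hb
  have h1b : (0:ℝ) < 1 + b := by linarith
  have h1b' : (0:ℝ) < 1 - b := by linarith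
  have hs : e - d = ηh + (ηk + ηR) := by linarith
  have hup : |e - d| ≤ |ηh| + |ηk + ηR| := hs ▸ abs_add_le _ _
  have hlo : |ηh| - |ηk + ηR| ≤ |e - d| := by
    have h : |ηh| ≤ |e - d| + |ηk + ηR| := by
      calc |ηh| = |(e - d) - (ηk + ηR)| := by rw [hs]; ring_nf
        _ ≤ |e - d| + |ηk + ηR| := abs_sub _ _
    linarith
  have ht1 : |e| - |d| ≤ |e - d| := abs_sub_abs_le_abs_sub e d
  have ht2 : |e - d| ≤ |e| + |d| := abs_sub e d
  have H1 : |ηh| - |ηk + ηR| ≤ (1 + b) * |e| := by linarith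
  have H2 : (1 - b) * |e| ≤ |ηh| + |ηk + ηR| := by linarith
  have L : (1 / (1 + b)) * (|ηh| - |ηk + ηR|) ≤ |e| := by
    rw [div_mul_eq_mul_div, one_mul, div_le_iff₀ h1b]
    linarith
  have R : |e| ≤ (1 / (1 - b)) * (|ηh| + |ηk + ηR|) := by
    rw [div_mul_eq_mul_div, one_mul, le_div_iff₀ h1b']
    linarith
  refine ⟨⟨L, R⟩, fun α hα hαη => ?_⟩
  obtain ⟨hα0, hα1⟩ := hα
  constructor
  · rw [div_mul_eq_mul_div, div_le_iff₀ h1b]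
    nlinarith
  · rw [div_mul_eq_mul_div, le_div_iff₀ h1b']
    nlinarith
end

section
/- Let e, d, η_h, η_k, η_R ∈ ℝ satisfy e = d + η_h + η_k + η_R with e ≠ 0, and suppose there exist b ∈ (0,1) with |d| ≤ b·|e| and α ∈ (0,1) with |η_k + η_R| ≤ α·|η_h|. Then the effectivity index I_eff := η_h / e satisfies the bounds (1−b)/(1+α) ≤ |I_eff| ≤ (1+b)/(1−α). -/
/-- Bounds on the effectivity index `I_eff = η_h / e` of the discretization
error estimator: if `e = d + η_h + η_k + η_R`, `e ≠ 0`, `|d| ≤ b⋅|e|` with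
`b ∈ (0,1)` and `|η_k + η_R| ≤ α⋅|η_h|` with `α ∈ (0,1)`, then
`(1−b)/(1+α) ≤ |η_h / e| ≤ (1+b)/(1−α)`. -/
theorem discretization_effectivity_index_bounds (e d ηh ηk ηR b α : ℝ)
    (hrep : e = d + ηh + ηk + ηR) (he : e ≠ 0)
    (hb : b ∈ Set.Ioo (0:ℝ) 1) (hsat : |d| ≤ b * |e|)
    (hα : α ∈ Set.Ioo (0:ℝ) 1) (hrest : |ηk + ηR| ≤ α * |ηh|) :
    (1 - b) / (1 + α) ≤ |ηh / e| ∧ |ηh / e| ≤ (1 + b) / (1 - α) := by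
  obtain ⟨hb0, hb1⟩ := hb
  obtain ⟨ha0, ha1⟩ := hα
  have hepos : (0:ℝ) < |e| := abs_pos.mpr he
  have hed : e - d = ηh + (ηk + ηR) := by rw [hrep]; ring
  have hlow : (1 - b) * |e| ≤ |e - d| := by
    have := abs_sub_abs_le_abs_sub e d
    nlinarith
  have hhigh : |e - d| ≤ (1 + b) * |e| := by
    have := abs_sub e d
    nlinarith
  have hlow2 : (1 - α) * |ηh| ≤ |e - d| := by
    rw [hed]
    have h1 : |ηh| ≤ |ηh + (ηk + ηR)| + |ηk + ηR| := by
      calc |ηh| = |ηh + (ηk + ηR) + (-(ηk + ηR))| := by ring_nf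
        _ ≤ |ηh + (ηk + ηR)| + |-(ηk + ηR)| := abs_add_le _ _
        _ = |ηh + (ηk + ηR)| + |ηk + ηR| := by rw [abs_neg]
    nlinarith
  have hhigh2 : |e - d| ≤ (1 + α) * |ηh| := by
    rw [hed]
    have := abs_add_le ηh (ηk + ηR)
    nlinarith
  rw [abs_div]
  constructor
  · rw [div_le_div_iff₀ (by linarith) hepos]
    nlinarith
  · rw [div_le_div_iff₀ hepos (by linarith)]
    nlinarith
end

section
/- Let e, d, η_I ∈ ℝ satisfy the error representation e = d + η_I, and suppose the saturation assumption for interpolations holds: there exists bᴵ ∈ (0,1) with |d| ≤ bᴵ·|e|. Then the interpolation error estimator η_I is efficient and reliable with constants 1/(1+bᴵ) and 1/(1−bᴵ): (1/(1+bᴵ))·|η_I| ≤ |e| ≤ (1/(1−bᴵ))·|η_I|. -/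
/-- Efficiency and reliability of the interpolation error estimator `η_I`:
if `e = d + η_I` and the saturation assumption for interpolations
`|d| ≤ bᴵ⋅|e|` holds with `bᴵ ∈ (0,1)`, then
`(1/(1+bᴵ))⋅|η_I| ≤ |e| ≤ (1/(1−bᴵ))⋅|η_I|`. -/
theorem interpolation_estimator_efficient_reliable (e d ηI bI : ℝ)
    (hrep : e = d + ηI) (hb : bI ∈ Set.Ioo (0:ℝ) 1) (hsat : |d| ≤ bI * |e|) :
    (1 / (1 + bI)) * |ηI| ≤ |e| ∧ |e| ≤ (1 / (1 - bI)) * |ηI| := by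
  obtain ⟨hb0, hb1⟩ := hb
  have hη : ηI = e - d := by linarith
  have h1 : |ηI| ≤ (1 + bI) * |e| := by
    calc |ηI| ≤ |e| + |d| := by rw [hη]; exact abs_sub _ _
    _ ≤ |e| + bI * |e| := by linarith
    _ = (1 + bI) * |e| := by ring
  have h2 : (1 - bI) * |e| ≤ |ηI| := by
    have := abs_sub_abs_le_abs_sub e d
    rw [← hη] at this
    nlinarith
  constructor
  · rw [div_mul_eq_mul_div, div_le_iff₀ (by linarith)]
    linarith
  · rw [div_mul_eq_mul_div, le_div_iff₀ (by linarith)]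
    linarith
end

section
/- Let e, d, η_{I,h}, η_k, η_{R_I}, η_{I_u}, η_{I_z} ∈ ℝ satisfy the error representation e = d + η_{I,h} + η_k + η_{R_I} + η_{I_u} + η_{I_z}, and suppose there exists bᴵ ∈ (0,1) with |d| ≤ bᴵ·|e| (saturation assumption for interpolations). Then (1/(1+bᴵ))·(|η_{I,h}| − |η_k + η_{R_I} + η_{I_u} + η_{I_z}|) ≤ |e| ≤ (1/(1−bᴵ))·(|η_{I,h}| + |η_k + η_{R_I} + η_{I_u} + η_{I_z}|). If, in addition, there exists α ∈ (0,1) with |η_k + η_{R_I} + η_{I_u} + η_{I_z}| ≤ α·|η_{I,h}|, then the discretization error estimator η_{I,h} is efficient and reliable: ((1−α)/(1+bᴵ))·|η_{I,h}| ≤ |e| ≤ ((1+α)/(1−bᴵ))·|η_{I,h}|. -/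
/-!
Since `e - d = η_{I,h} + (η_k + η_{R_I} + η_{I_u} + η_{I_z})`, the saturation assumption
`‖d‖ ≤ b‖e‖` and the triangle inequality pin `‖e - d‖` between `(1 - b)‖e‖` and `(1 + b)‖e‖`;
the triangle inequality once more bounds `‖e - d‖` by `‖η_{I,h}‖ ∓ ‖η_k + ⋯‖`, and the smallness
`‖η_k + ⋯‖ ≤ α‖η_{I,h}‖` turns these bounds into multiples of `‖η_{I,h}‖`.
-/

section Saturation

variable {E : Type*} [SeminormedAddCommGroup E] {e d : E} {b : ℝ}

theorem one_sub_mul_norm_le_norm_sub_of_norm_le (hsat : ‖d‖ ≤ b * ‖e‖) :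
    (1 - b) * ‖e‖ ≤ ‖e - d‖ := by
  linarith [norm_sub_norm_le e d]

theorem norm_sub_le_one_add_mul_norm_of_norm_le (hsat : ‖d‖ ≤ b * ‖e‖) :
    ‖e - d‖ ≤ (1 + b) * ‖e‖ := by
  linarith [norm_sub_le e d]

theorem norm_le_one_div_one_sub_mul_norm_sub (hsat : ‖d‖ ≤ b * ‖e‖) (hb : b < 1) :
    ‖e‖ ≤ 1 / (1 - b) * ‖e - d‖ := by
  rw [one_div_mul_eq_div, le_div_iff₀ (by linarith), mul_comm]
  exact one_sub_mul_norm_le_norm_sub_of_norm_le hsat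

theorem one_div_one_add_mul_norm_sub_le_norm (hsat : ‖d‖ ≤ b * ‖e‖) (hb : -1 < b) :
    1 / (1 + b) * ‖e - d‖ ≤ ‖e‖ := by
  rw [one_div_mul_eq_div, div_le_iff₀ (by linarith), mul_comm]
  exact norm_sub_le_one_add_mul_norm_of_norm_le hsat

end Saturation

/-- Efficiency and reliability for the interpolation discretization error
estimator `η_{I,h}`: with `e = d + η_{I,h} + η_k + η_{R_I} + η_{I_u} + η_{I_z}`
and saturation `|d| ≤ bᴵ⋅|e|`, `bᴵ ∈ (0,1)`, one has the two-sided estimate,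
and if moreover `|η_k + η_{R_I} + η_{I_u} + η_{I_z}| ≤ α⋅|η_{I,h}|` with
`α ∈ (0,1)`, then `((1−α)/(1+bᴵ))⋅|η_{I,h}| ≤ |e| ≤ ((1+α)/(1−bᴵ))⋅|η_{I,h}|`. -/
theorem interpolation_discretization_estimator_efficient_reliable
    (e d ηIh ηk ηRI ηIu ηIz bI : ℝ)
    (hrep : e = d + ηIh + ηk + ηRI + ηIu + ηIz)
    (hb : bI ∈ Set.Ioo (0:ℝ) 1) (hsat : |d| ≤ bI * |e|) :
    ((1 / (1 + bI)) * (|ηIh| - |ηk + ηRI + ηIu + ηIz|) ≤ |e| ∧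
      |e| ≤ (1 / (1 - bI)) * (|ηIh| + |ηk + ηRI + ηIu + ηIz|)) ∧
    (∀ α ∈ Set.Ioo (0:ℝ) 1, |ηk + ηRI + ηIu + ηIz| ≤ α * |ηIh| →
      ((1 - α) / (1 + bI)) * |ηIh| ≤ |e| ∧ |e| ≤ ((1 + α) / (1 - bI)) * |ηIh|) := by
  obtain ⟨hb0, hb1⟩ := hb
  have h1p : 0 < 1 + bI := by linarith
  have h1m : 0 < 1 - bI := by linarith
  set S := ηk + ηRI + ηIu + ηIz
  have hsplit : e - d = ηIh + S := by rw [hrep]; ring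
  have hlow : 1 / (1 + bI) * (|ηIh| - |S|) ≤ |e| :=
    calc 1 / (1 + bI) * (|ηIh| - |S|) ≤ 1 / (1 + bI) * |e - d| := by
          rw [hsplit]; gcongr; exact abs_sub_abs_le_abs_add ηIh S
      _ ≤ |e| := one_div_one_add_mul_norm_sub_le_norm (e := e) hsat (by linarith)
  have hup : |e| ≤ 1 / (1 - bI) * (|ηIh| + |S|) :=
    calc |e| ≤ 1 / (1 - bI) * |e - d| := norm_le_one_div_one_sub_mul_norm_sub (e := e) hsat hb1
      _ ≤ 1 / (1 - bI) * (|ηIh| + |S|) := by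
          rw [hsplit]; gcongr; exact abs_add_le ηIh S
  refine ⟨⟨hlow, hup⟩, fun α _ hS => ⟨?_, ?_⟩⟩
  · calc (1 - α) / (1 + bI) * |ηIh| = 1 / (1 + bI) * (|ηIh| - α * |ηIh|) := by ring
      _ ≤ 1 / (1 + bI) * (|ηIh| - |S|) := by gcongr
      _ ≤ |e| := hlow
  · calc |e| ≤ 1 / (1 - bI) * (|ηIh| + |S|) := hup
      _ ≤ 1 / (1 - bI) * (|ηIh| + α * |ηIh|) := by gcongr
      _ = (1 + α) / (1 - bI) * |ηIh| := by ring
end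

section
/- Let e, d, η_I ∈ ℝ satisfy e = d + η_I with e ≠ 0, and suppose there exists bᴵ ∈ (0,1) with |d| ≤ bᴵ·|e|. Then the effectivity index I_eff,+ᴵ := η_I / e satisfies 1 − bᴵ ≤ |I_eff,+ᴵ| ≤ 1 + bᴵ. If moreover η_I = η_{I,h} + η_rest with |η_rest| ≤ α·|η_{I,h}| for some α ∈ (0,1), then the effectivity index I_effᴵ := η_{I,h} / e satisfies (1−bᴵ)/(1+α) ≤ |I_effᴵ| ≤ (1+bᴵ)/(1−α). -/
/-- Bounds on the effectivity indices for interpolations: if `e = d + η_I`,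
`e ≠ 0` and `|d| ≤ bᴵ⋅|e|` with `bᴵ ∈ (0,1)`, then
`1 − bᴵ ≤ |η_I / e| ≤ 1 + bᴵ`; if moreover `η_I = η_{I,h} + η_rest` with
`|η_rest| ≤ α⋅|η_{I,h}|` for some `α ∈ (0,1)`, then
`(1−bᴵ)/(1+α) ≤ |η_{I,h} / e| ≤ (1+bᴵ)/(1−α)`. -/
theorem interpolation_effectivity_index_bounds (e d ηI bI : ℝ)
    (hrep : e = d + ηI) (he : e ≠ 0)
    (hb : bI ∈ Set.Ioo (0:ℝ) 1) (hsat : |d| ≤ bI * |e|) :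
    (1 - bI ≤ |ηI / e| ∧ |ηI / e| ≤ 1 + bI) ∧
    (∀ ηIh ηrest : ℝ, ηI = ηIh + ηrest →
      ∀ α ∈ Set.Ioo (0:ℝ) 1, |ηrest| ≤ α * |ηIh| →
        (1 - bI) / (1 + α) ≤ |ηIh / e| ∧ |ηIh / e| ≤ (1 + bI) / (1 - α)) := by
  have hepos : 0 < |e| := abs_pos.mpr he
  have hηe : ηI = e - d := by linarith
  have hlow : (1 - bI) * |e| ≤ |ηI| := by
    have h1 : |e| - |d| ≤ |ηI| := by
      rw [hηe]; exact abs_sub_abs_le_abs_sub e d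
    nlinarith
  have hhigh : |ηI| ≤ (1 + bI) * |e| := by
    have h1 : |ηI| ≤ |e| + |d| := by rw [hηe]; exact abs_sub _ _
    nlinarith
  have habsdiv : |ηI / e| = |ηI| / |e| := abs_div _ _
  constructor
  · constructor
    · rw [habsdiv, le_div_iff₀ hepos]; linarith
    · rw [habsdiv, div_le_iff₀ hepos]; linarith
  · intro ηIh ηrest hsum α hα hrest
    obtain ⟨hα0, hα1⟩ := hα
    have h1 : |ηI| ≤ (1 + α) * |ηIh| := by
      have := abs_add_le ηIh ηrest
      rw [← hsum] at this; nlinarith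
    have h2 : (1 - α) * |ηIh| ≤ |ηI| := by
      have : |ηIh| - |ηrest| ≤ |ηI| := by
        rw [hsum]
        have h : |ηIh| ≤ |ηIh + ηrest| + |-ηrest| := by
          have := abs_add_le (ηIh + ηrest) (-ηrest)
          simpa using this
        rw [abs_neg] at h
        linarith
      nlinarith
    have habsdiv2 : |ηIh / e| = |ηIh| / |e| := abs_div _ _
    constructor
    · rw [habsdiv2, div_le_div_iff₀ (by linarith) hepos]
      nlinarith
    · rw [habsdiv2, div_le_div_iff₀ hepos (by linarith)]
      nlinarith
end

section
/- Let U and V be real normed vector spaces, B : U × V → ℝ a bilinear form, c ∈ V* and J ∈ U* continuous linear functionals, and consider the affine linear operator A(û)(φ) := B(û, φ) + c(φ) together with the linear goal functional J. Let U₂ ⊆ U and V₂ ⊆ V be linear subspaces, let u₂ ∈ U₂ satisfy the discrete primal problem B(u₂, φ) + c(φ) = 0 for all φ ∈ V₂, and let z₂ ∈ V₂ satisfy the discrete adjoint problem B(v, z₂) = J(v) for all v ∈ U₂. Then for all ũ ∈ U₂ and z̃ ∈ V₂, the primal and adjoint parts of the discretization error estimator coincide: ρ(ũ)(z₂ − z̃)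 = ρ*(ũ,z̃)(u₂ − ũ), where ρ(ũ)(φ) := −B(ũ, φ) − c(φ) and ρ*(ũ,z̃)(v) := J(v) − B(v, z̃); indeed both sides equal B(u₂ − ũ, z₂ − z̃). -/
/-- For an affine linear operator `A(û)(φ) = B(û,φ) + c(φ)` and a linear goal
functional `J`, with `u₂ ∈ U₂` solving the discrete primal problem and
`z₂ ∈ V₂` solving the discrete adjoint problem, the primal and adjoint parts
of the discretization error estimator coincide for all `ũ ∈ U₂`, `z̃ ∈ V₂`:
`ρ(ũ)(z₂ − z̃) = ρ*(ũ,z̃)(u₂ − ũ)`, and both equal `B(u₂ − ũ, z₂ − z̃)`. -/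
theorem primal_adjoint_estimator_parts_coincide {U V : Type*}
    [NormedAddCommGroup U] [NormedSpace ℝ U]
    [NormedAddCommGroup V] [NormedSpace ℝ V]
    (B : U →ₗ[ℝ] V →ₗ[ℝ] ℝ) (c : V →L[ℝ] ℝ) (J : U →L[ℝ] ℝ)
    (U₂ : Submodule ℝ U) (V₂ : Submodule ℝ V)
    (u₂ : U) (hu₂m : u₂ ∈ U₂) (hu₂ : ∀ φ ∈ V₂, B u₂ φ + c φ = 0)
    (z₂ : V) (hz₂m : z₂ ∈ V₂) (hz₂ : ∀ v ∈ U₂, B v z₂ = J v) :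
    ∀ ut ∈ U₂, ∀ zt ∈ V₂,
      (-(B ut (z₂ - zt)) - c (z₂ - zt) = J (u₂ - ut) - B (u₂ - ut) zt) ∧
      -(B ut (z₂ - zt)) - c (z₂ - zt) = B (u₂ - ut) (z₂ - zt) := by
  intro ut hut zt hzt
  have h1 := hu₂ z₂ hz₂m
  have h2 := hu₂ zt hzt
  have h3 := hz₂ u₂ hu₂m
  have h4 := hz₂ ut hut
  constructor <;>
    simp only [map_sub, LinearMap.sub_apply, ContinuousLinearMap.map_sub] at * <;>
    linarith
end
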